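/- arXiv:2407.15772 — 7 statements merged into one kernel-verified Lean document; each statement's English description precedes it below -/
import Mathlib

section
/- Let F be a finite extension of ℚ_p with ring of integers 𝔬 and maximal ideal 𝔭, and let F_q = 𝔬/𝔭 be the residue field. The entrywise reduction homomorphism K = GSp(4,𝔬) → GSp(4,F_q) maps the subgroup H surjectively onto the subgroup M of GSp(4,F_q), and its restriction to H has kernel K⁺ = ker(K → GSp(4,F_q)). Consequently H/K⁺ ≅ M. -/
open Matrix

/-- The symplectic form `J`. -/
def Jmat (R : Type*) [CommRing R] : Matrix (Fin 4) (Fin 4) R :=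
  !![0, 0, 0, 1; 0, 0, 1, 0; 0, -1, 0, 0; -1, 0, 0, 0]

/-- `GSp(4,R)`: invertible matrices `g` with `gᵀ J g = μ(g) J` for some unit `μ(g)`. -/
def GSp4 (R : Type*) [CommRing R] : Set (Matrix (Fin 4) (Fin 4) R) :=
  {g | IsUnit g ∧ ∃ μ : Rˣ, gᵀ * Jmat R * g = (μ : R) • Jmat R}

/-- The ring of integers `𝔬 = {x : ‖x‖ ≤ 1}` of a nonarchimedean field, as a subring. -/
def intSubring (F : Type*) [NormedField F]
    (hna : IsNonarchimedean (fun x : F => ‖x‖)) : Subring F where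
  carrier := {x | ‖x‖ ≤ 1}
  one_mem' := by simp
  zero_mem' := by simp
  mul_mem' := by
    intro a b ha hb
    calc ‖a * b‖ = ‖a‖ * ‖b‖ := norm_mul a b
      _ ≤ 1 := mul_le_one₀ ha (norm_nonneg b) hb
  add_mem' := by
    intro a b ha hb
    exact le_trans (hna a b) (max_le ha hb)
  neg_mem' := by
    intro a ha
    simpa using ha

/-- The maximal ideal `𝔭 = {x : ‖x‖ < 1}` of the ring of integers. -/
def maxIdeal (F : Type*) [NormedField F] (hna : IsNonarchimedean (fun x : F => ‖x‖)) :
    Ideal (intSubring F hna) where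
  carrier := {x | ‖(x : F)‖ < 1}
  zero_mem' := by simp
  add_mem' := by
    intro a b ha hb
    exact lt_of_le_of_lt (hna (a : F) (b : F)) (max_lt ha hb)
  smul_mem' := by
    intro c x hx
    have hc : ‖(c : F)‖ ≤ 1 := c.2
    calc ‖((c * x : intSubring F hna) : F)‖ = ‖(c : F)‖ * ‖(x : F)‖ := norm_mul _ _
      _ ≤ 1 * ‖(x : F)‖ := by
          exact mul_le_mul_of_nonneg_right hc (norm_nonneg _)
      _ = ‖(x : F)‖ := one_mul _
      _ < 1 := hx

/-- The subgroup `H ⊆ K = GSp(4,𝔬)`: matrices whose `(1,3), (1,4), (2,3), (2,4), (3,1),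
(3,2), (4,1), (4,2)` entries lie in `𝔭`, as a set of matrices over `𝔬`. -/
def Hgp (F : Type*) [NormedField F] (hna : IsNonarchimedean (fun x : F => ‖x‖)) :
    Set (Matrix (Fin 4) (Fin 4) (intSubring F hna)) :=
  {g | g ∈ GSp4 (intSubring F hna) ∧
    g 0 2 ∈ maxIdeal F hna ∧ g 0 3 ∈ maxIdeal F hna ∧
    g 1 2 ∈ maxIdeal F hna ∧ g 1 3 ∈ maxIdeal F hna ∧
    g 2 0 ∈ maxIdeal F hna ∧ g 2 1 ∈ maxIdeal F hna ∧
    g 3 0 ∈ maxIdeal F hna ∧ g 3 1 ∈ maxIdeal F hna}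

/-- The subgroup `M` of `GSp(4, F_q)`: block matrices with rows `(a,b,0,0)`, `(c,d,0,0)`,
`(0,0,λa,−λb)`, `(0,0,−λc,λd)` with `λ` a unit and `ad − bc` a unit. -/
def Mset (R : Type*) [CommRing R] : Set (Matrix (Fin 4) (Fin 4) R) :=
  {g | ∃ a b c d lam : R, IsUnit lam ∧ IsUnit (a * d - b * c) ∧
    g = !![a, b, 0, 0; c, d, 0, 0; 0, 0, lam * a, -(lam * b); 0, 0, -(lam * c), lam * d]}

/-!
Reducing an element of `H` modulo `𝔭` kills its two off-diagonal `2 × 2` blocks. For a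
block-diagonal matrix `diag(P, Q)` the symplectic condition reads `Pᵀ J' Q = μ J'` with `J'` the
`2 × 2` antidiagonal matrix; hence `det P · det Q = μ²`, so `det P` is a unit, and solving for `Q`
gives `Q = μ (det P)⁻¹ · [[a, -b], [-c, d]]`, the shape defining `M`. This works over any
commutative ring. Conversely, a matrix in `M` lifts entrywise to a matrix of the same shape over
`𝔬`, which lies in `H` because `𝔬` is local with maximal ideal `𝔭`, so lifts of units are units.
Reducing to `1` forces every off-diagonal entry into `𝔭`, which gives the kernel.
-/

section GSp4

variable {R S : Type*} [CommRing R] [CommRing S]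

lemma Jmat_mul_Jmat : Jmat R * Jmat R = -1 := by
  ext i j; fin_cases i <;> fin_cases j <;> simp [Jmat, Matrix.mul_apply, Fin.sum_univ_four]

lemma Jmat_map (f : R →+* S) : (Jmat R).map f = Jmat S := by
  ext i j; fin_cases i <;> fin_cases j <;> simp [Jmat]

/-- `-μ⁻¹ J gᵀ J` is a left inverse of `g`. -/
lemma isUnit_of_transpose_mul_Jmat_mul_eq_smul {g : Matrix (Fin 4) (Fin 4) R} {μ : Rˣ}
    (h : gᵀ * Jmat R * g = (μ : R) • Jmat R) : IsUnit g := by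
  refine (Matrix.isUnit_iff_isUnit_det g).mpr (Matrix.isUnit_det_of_left_inverse
    (B := -((μ⁻¹ : Rˣ) : R) • (Jmat R * gᵀ * Jmat R)) ?_)
  rw [Matrix.smul_mul, Matrix.mul_assoc, Matrix.mul_assoc, ← Matrix.mul_assoc gᵀ, h,
    Matrix.mul_smul, Jmat_mul_Jmat, smul_smul, neg_mul, Units.inv_mul, neg_smul, one_smul,
    neg_neg]

lemma mem_GSp4_iff {g : Matrix (Fin 4) (Fin 4) R} :
    g ∈ GSp4 R ↔ ∃ μ : Rˣ, gᵀ * Jmat R * g = (μ : R) • Jmat R :=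
  ⟨And.right, fun ⟨μ, h⟩ => ⟨isUnit_of_transpose_mul_Jmat_mul_eq_smul h, μ, h⟩⟩

lemma map_mem_GSp4 (f : R →+* S) {g : Matrix (Fin 4) (Fin 4) R} (hg : g ∈ GSp4 R) :
    g.map f ∈ GSp4 S := by
  obtain ⟨μ, hμ⟩ := mem_GSp4_iff.mp hg
  refine mem_GSp4_iff.mpr ⟨Units.map f μ, ?_⟩
  have := congrArg (·.map f) hμ
  simpa only [Matrix.map_mul, Matrix.transpose_map, Jmat_map, Matrix.map_smul' f _ _ (map_mul f),
    Units.coe_map, MonoidHom.coe_coe] using this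

lemma Mset_subset_GSp4 : Mset R ⊆ GSp4 R := by
  rintro _ ⟨a, b, c, d, lam, hlam, hδ, rfl⟩
  refine mem_GSp4_iff.mpr ⟨hlam.unit * hδ.unit, ?_⟩
  ext i j
  fin_cases i <;> fin_cases j <;>
    simp [Jmat, Matrix.mul_apply, Fin.sum_univ_four] <;> ring

lemma mem_Mset_of_mem_GSp4 {g : Matrix (Fin 4) (Fin 4) R} (hg : g ∈ GSp4 R)
    (h02 : g 0 2 = 0) (h03 : g 0 3 = 0) (h12 : g 1 2 = 0) (h13 : g 1 3 = 0)
    (h20 : g 2 0 = 0) (h21 : g 2 1 = 0) (h30 : g 3 0 = 0) (h31 : g 3 1 = 0) :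
    g ∈ Mset R := by
  obtain ⟨μ, hμ⟩ := mem_GSp4_iff.mp hg
  have e02 := congrFun₂ hμ 0 2
  have e03 := congrFun₂ hμ 0 3
  have e12 := congrFun₂ hμ 1 2
  have e13 := congrFun₂ hμ 1 3
  simp only [Jmat, Fin.isValue, Matrix.mul_apply, transpose_apply, of_apply, cons_val',
    cons_val_fin_one, Fin.sum_univ_four, cons_val_zero, cons_val_one, cons_val, Matrix.smul_apply,
    smul_eq_mul, h02, h03, h12, h13, h20, h21, h30, h31, zero_mul, mul_zero, add_zero, zero_add,
    mul_one] at e02 e03 e12 e13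
  have hdet : (g 0 0 * g 1 1 - g 0 1 * g 1 0) * (g 2 2 * g 3 3 - g 2 3 * g 3 2) = μ * μ := by
    linear_combination (g 1 0 * g 2 3 + g 0 0 * g 3 3) * e12 + (μ : R) * e03 -
      (g 1 1 * g 2 3 + g 0 1 * g 3 3) * e02
  have hδ : IsUnit (g 0 0 * g 1 1 - g 0 1 * g 1 0) :=
    isUnit_of_mul_isUnit_left (hdet ▸ μ.isUnit.mul μ.isUnit)
  obtain ⟨v, hv⟩ := hδ.exists_left_inv
  have h22 : g 2 2 = μ * v * g 0 0 := by
    linear_combination v * (g 0 0 * e12 - g 0 1 * e02) - g 2 2 * hv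
  have h23 : g 2 3 = -(μ * v * g 0 1) := by
    linear_combination v * (g 0 0 * e13 - g 0 1 * e03) - g 2 3 * hv
  have h32 : g 3 2 = -(μ * v * g 1 0) := by
    linear_combination v * (g 1 1 * e02 - g 1 0 * e12) - g 3 2 * hv
  have h33 : g 3 3 = μ * v * g 1 1 := by
    linear_combination v * (g 1 1 * e03 - g 1 0 * e13) - g 3 3 * hv
  refine ⟨g 0 0, g 0 1, g 1 0, g 1 1, μ * v, μ.isUnit.mul (.of_mul_eq_one _ hv), hδ, ?_⟩
  ext i j
  fin_cases i <;> fin_cases j <;>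
    simp [h02, h03, h12, h13, h20, h21, h30, h31, h22, h23, h32, h33]

lemma exists_mem_Mset_map_eq {f : R →+* S} (hf : Function.Surjective f) [IsLocalHom f]
    {m : Matrix (Fin 4) (Fin 4) S} (hm : m ∈ Mset S) : ∃ g ∈ Mset R, g.map f = m := by
  obtain ⟨a, b, c, d, lam, hlam, hδ, rfl⟩ := hm
  obtain ⟨a, rfl⟩ := hf a
  obtain ⟨b, rfl⟩ := hf b
  obtain ⟨c, rfl⟩ := hf c
  obtain ⟨d, rfl⟩ := hf d
  obtain ⟨lam, rfl⟩ := hf lam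
  refine ⟨_, ⟨a, b, c, d, lam, (isUnit_map_iff f _).mp hlam, (isUnit_map_iff f _).mp ?_, rfl⟩, ?_⟩
  · simpa only [map_sub, map_mul] using hδ
  · ext i j
    fin_cases i <;> fin_cases j <;> simp

end GSp4

section IntegerRing

variable {F : Type*} [NormedField F] (hna : IsNonarchimedean (fun x : F => ‖x‖))

lemma isUnit_of_notMem_maxIdeal {x : intSubring F hna} (hx : x ∉ maxIdeal F hna) : IsUnit x := by
  have hnorm : ‖(x : F)‖ = 1 := le_antisymm x.2 (not_lt.mp hx)
  have hx0 : (x : F) ≠ 0 := norm_ne_zero_iff.mp (by simp [hnorm])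
  refine .of_mul_eq_one ⟨(x : F)⁻¹, ?_⟩ (Subtype.ext (mul_inv_cancel₀ hx0))
  show ‖(x : F)⁻¹‖ ≤ 1
  rw [norm_inv, hnorm, inv_one]

lemma one_notMem_maxIdeal : (1 : intSubring F hna) ∉ maxIdeal F hna := by
  show ¬ ‖((1 : intSubring F hna) : F)‖ < 1
  simp

/-- `𝔬` is local with maximal ideal `𝔭`, so `𝔭` lies in the Jacobson radical. -/
instance isLocalHom_mk_maxIdeal : IsLocalHom (Ideal.Quotient.mk (maxIdeal F hna)) := by
  refine isLocalHom_of_le_jacobson_bot _ fun x hx => Ideal.mem_jacobson_bot.mpr fun y => ?_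
  refine isUnit_of_notMem_maxIdeal hna fun h => one_notMem_maxIdeal hna ?_
  simpa using (maxIdeal F hna).sub_mem h ((maxIdeal F hna).mul_mem_right y hx)

lemma Mset_subset_Hgp : Mset (intSubring F hna) ⊆ Hgp F hna := by
  rintro g hg
  refine ⟨Mset_subset_GSp4 hg, ?_⟩
  obtain ⟨a, b, c, d, lam, -, -, rfl⟩ := hg
  simp

lemma map_mk_mem_Mset_of_mem_Hgp {g : Matrix (Fin 4) (Fin 4) (intSubring F hna)}
    (hg : g ∈ Hgp F hna) :
    g.map (Ideal.Quotient.mk (maxIdeal F hna)) ∈ Mset (intSubring F hna ⧸ maxIdeal F hna) := by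
  obtain ⟨hG, h02, h03, h12, h13, h20, h21, h30, h31⟩ := hg
  exact mem_Mset_of_mem_GSp4 (map_mem_GSp4 _ hG)
    (Ideal.Quotient.eq_zero_iff_mem.mpr h02) (Ideal.Quotient.eq_zero_iff_mem.mpr h03)
    (Ideal.Quotient.eq_zero_iff_mem.mpr h12) (Ideal.Quotient.eq_zero_iff_mem.mpr h13)
    (Ideal.Quotient.eq_zero_iff_mem.mpr h20) (Ideal.Quotient.eq_zero_iff_mem.mpr h21)
    (Ideal.Quotient.eq_zero_iff_mem.mpr h30) (Ideal.Quotient.eq_zero_iff_mem.mpr h31)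

lemma mem_Hgp_of_map_mk_eq_one {g : Matrix (Fin 4) (Fin 4) (intSubring F hna)}
    (hg : g ∈ GSp4 (intSubring F hna)) (h1 : g.map (Ideal.Quotient.mk (maxIdeal F hna)) = 1) :
    g ∈ Hgp F hna := by
  have offDiag {i j : Fin 4} (hij : i ≠ j) : g i j ∈ maxIdeal F hna := by
    simpa [Matrix.one_apply_ne hij, Ideal.Quotient.eq_zero_iff_mem] using congrFun₂ h1 i j
  exact ⟨hg, offDiag (by decide), offDiag (by decide), offDiag (by decide), offDiag (by decide),
    offDiag (by decide), offDiag (by decide), offDiag (by decide), offDiag (by decide)⟩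

end IntegerRing

theorem reduction_H_onto_M_kernel_Kplus_general
    (F : Type*) [NontriviallyNormedField F]
    (hna : IsNonarchimedean (fun x : F => ‖x‖)) :
    (∀ g ∈ Hgp F hna,
      g.map (Ideal.Quotient.mk (maxIdeal F hna)) ∈
        Mset ((intSubring F hna) ⧸ maxIdeal F hna) ∧
      g.map (Ideal.Quotient.mk (maxIdeal F hna)) ∈
        GSp4 ((intSubring F hna) ⧸ maxIdeal F hna)) ∧
    (∀ m ∈ Mset ((intSubring F hna) ⧸ maxIdeal F hna),
      ∃ g ∈ Hgp F hna, g.map (Ideal.Quotient.mk (maxIdeal F hna)) = m) ∧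
    {g | g ∈ Hgp F hna ∧ g.map (Ideal.Quotient.mk (maxIdeal F hna)) = 1} =
      {g | g ∈ GSp4 (intSubring F hna) ∧
        g.map (Ideal.Quotient.mk (maxIdeal F hna)) = 1} := by
  refine ⟨fun g hg => ⟨map_mk_mem_Mset_of_mem_Hgp hna hg, map_mem_GSp4 _ hg.1⟩,
    fun m hm => ?_, ?_⟩
  · obtain ⟨g, hg, rfl⟩ := exists_mem_Mset_map_eq Ideal.Quotient.mk_surjective hm
    exact ⟨g, Mset_subset_Hgp hna hg, rfl⟩
  · ext g
    exact ⟨fun ⟨hg, h1⟩ => ⟨hg.1, h1⟩, fun ⟨hg, h1⟩ => ⟨mem_Hgp_of_map_mk_eq_one hna hg h1, h1⟩⟩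

/-- The entrywise reduction `K = GSp(4,𝔬) → GSp(4,F_q)`, `F_q = 𝔬/𝔭`,
maps `H` surjectively onto `M ⊆ GSp(4,F_q)`, and its restriction to `H` has kernel
`K⁺ = ker(K → GSp(4,F_q))`. -/
theorem reduction_H_onto_M_kernel_Kplus
    (p : ℕ) [Fact p.Prime] (F : Type*) [NontriviallyNormedField F]
    [NormedAlgebra ℚ_[p] F] [FiniteDimensional ℚ_[p] F]
    (hna : IsNonarchimedean (fun x : F => ‖x‖)) :
    (∀ g ∈ Hgp F hna,
      g.map (Ideal.Quotient.mk (maxIdeal F hna)) ∈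
        Mset ((intSubring F hna) ⧸ maxIdeal F hna) ∧
      g.map (Ideal.Quotient.mk (maxIdeal F hna)) ∈
        GSp4 ((intSubring F hna) ⧸ maxIdeal F hna)) ∧
    (∀ m ∈ Mset ((intSubring F hna) ⧸ maxIdeal F hna),
      ∃ g ∈ Hgp F hna, g.map (Ideal.Quotient.mk (maxIdeal F hna)) = m) ∧
    {g | g ∈ Hgp F hna ∧ g.map (Ideal.Quotient.mk (maxIdeal F hna)) = 1} =
      {g | g ∈ GSp4 (intSubring F hna) ∧
        g.map (Ideal.Quotient.mk (maxIdeal F hna)) = 1} :=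
  reduction_H_onto_M_kernel_Kplus_general F hna
end

section
/- Let F_q be a finite field of odd characteristic. For all a, c, d ∈ F_qˣ and b ∈ F_q, there exists s ∈ T such that s·(t_{a²c,d} n_b u)·s⁻¹ = a·(t_{c,d} n_b u), and there exists s′ ∈ T such that s′·(t_{a²c,d} n_b w u)·s′⁻¹ = a·(t_{c,d} n_b w u). Here a·g denotes the scalar matrix aI₄ times g. -/
open Matrix

/-- The element `u`. -/
def uEl (R : Type*) [CommRing R] : Matrix (Fin 4) (Fin 4) R :=
  !![0, 0, 1, 0; 0, 0, 0, -1; 1, 0, 0, 0; 0, -1, 0, 0]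

/-- The torus element `t_{c,d} = diag(1, d, c, cd)`. -/
def tMat (R : Type*) [CommRing R] (c d : R) : Matrix (Fin 4) (Fin 4) R :=
  Matrix.diagonal ![1, d, c, c * d]

/-- The unipotent element `n_b`. -/
def nMat (R : Type*) [CommRing R] (b : R) : Matrix (Fin 4) (Fin 4) R :=
  !![1, b, 0, 0; 0, 1, 0, 0; 0, 0, 1, -b; 0, 0, 0, 1]

/-- The element `x = n_1`. -/
def xEl (R : Type*) [CommRing R] : Matrix (Fin 4) (Fin 4) R := nMat R 1

/-- The Weyl element `w`. -/
def wEl (R : Type*) [CommRing R] : Matrix (Fin 4) (Fin 4) R :=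
  !![0, 1, 0, 0; 1, 0, 0, 0; 0, 0, 0, 1; 0, 0, 1, 0]

/-- The torus `T = {t_{c,d} : c, d ∈ F_qˣ}`. -/
def Tset (Fq : Type*) [Field Fq] : Set (Matrix (Fin 4) (Fin 4) Fq) :=
  {m | ∃ c d : Fq, c ≠ 0 ∧ d ≠ 0 ∧ m = tMat Fq c d}

/-- The unipotent group `N = {n_b : b ∈ F_q}`. -/
def Nset (Fq : Type*) [Field Fq] : Set (Matrix (Fin 4) (Fin 4) Fq) :=
  {m | ∃ b : Fq, m = nMat Fq b}

lemma tMat_explicit (R : Type*) [CommRing R] (c d : R) :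
    tMat R c d = !![1, 0, 0, 0; 0, d, 0, 0; 0, 0, c, 0; 0, 0, 0, c * d] := by
  ext i j
  fin_cases i <;> fin_cases j <;>
    simp [tMat, Matrix.diagonal, Matrix.vecHead, Matrix.vecTail]

set_option maxHeartbeats 1600000 in
/-- For `a, c, d ∈ F_qˣ` and `b ∈ F_q` (`q` odd), `t_{a²c,d} n_b u` is
`T`-conjugate to `a • (t_{c,d} n_b u)`, and `t_{a²c,d} n_b w u` is `T`-conjugate to
`a • (t_{c,d} n_b w u)`. -/
theorem T_conjugate_square_scaling
    (Fq : Type*) [Field Fq] [Fintype Fq] (hchar : ringChar Fq ≠ 2)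
    (a c d : Fq) (ha : a ≠ 0) (hc : c ≠ 0) (hd : d ≠ 0) (b : Fq) :
    (∃ s ∈ Tset Fq,
      s * (tMat Fq (a ^ 2 * c) d * nMat Fq b * uEl Fq) * s⁻¹ =
        a • (tMat Fq c d * nMat Fq b * uEl Fq)) ∧
    (∃ s ∈ Tset Fq,
      s * (tMat Fq (a ^ 2 * c) d * nMat Fq b * wEl Fq * uEl Fq) * s⁻¹ =
        a • (tMat Fq c d * nMat Fq b * wEl Fq * uEl Fq)) := by
  have hinv : (tMat Fq a⁻¹ 1)⁻¹ = tMat Fq a 1 := by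
    apply Matrix.inv_eq_right_inv
    simp only [tMat_explicit]
    ext i j
    fin_cases i <;> fin_cases j <;>
      simp [Matrix.mul_apply, Fin.sum_univ_four, Matrix.vecHead, Matrix.vecTail,
        inv_mul_cancel₀ ha]
  have ha' : a⁻¹ ≠ 0 := inv_ne_zero ha
  constructor
  · refine ⟨tMat Fq a⁻¹ 1, ⟨a⁻¹, 1, ha', one_ne_zero, rfl⟩, ?_⟩
    rw [hinv]
    simp only [tMat_explicit]
    ext i j
    fin_cases i <;> fin_cases j <;>
      simp [nMat, uEl, Matrix.mul_apply, Fin.sum_univ_four, Matrix.vecHead,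
        Matrix.vecTail]
    all_goals (try field_simp)
    all_goals (try ring)
  · refine ⟨tMat Fq a⁻¹ 1, ⟨a⁻¹, 1, ha', one_ne_zero, rfl⟩, ?_⟩
    rw [hinv]
    simp only [tMat_explicit]
    ext i j
    fin_cases i <;> fin_cases j <;>
      simp [nMat, uEl, wEl, Matrix.mul_apply, Fin.sum_univ_four, Matrix.vecHead,
        Matrix.vecTail]
    all_goals (try field_simp)
    all_goals (try ring)
end

section
/- Let F_q be a finite field of odd characteristic. For all c, d ∈ F_qˣ and b ∈ F_qˣ (b ≠ 0): (i) t_{c,d} n_b u is conjugate by an element of T to t_{c,d} x u; (ii) t_{c,b²d} n_b w u is conjugate by an element of T to b·(t_{c,d} x w u), where b·g denotes the scalar matrix bI₄ times g. -/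
open Matrix

lemma tMat_inv (Fq : Type*) [Field Fq] (c d : Fq) (hc : c ≠ 0) (hd : d ≠ 0) :
    (tMat Fq c d)⁻¹ = tMat Fq c⁻¹ d⁻¹ := by
  apply inv_eq_right_inv
  rw [tMat, tMat, Matrix.diagonal_mul_diagonal]
  ext i j
  fin_cases i <;> fin_cases j <;>
    simp [Matrix.diagonal, Matrix.one_apply] <;> field_simp

set_option maxHeartbeats 1600000 in
/-- For `c, d ∈ F_qˣ` and `0 ≠ b ∈ F_q` (`q` odd): (i) `t_{c,d} n_b u` is
`T`-conjugate to `t_{c,d} x u`; (ii) `t_{c,b²d} n_b w u` is `T`-conjugate to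
`b • (t_{c,d} x w u)`. -/
theorem T_conjugate_to_x_normal_forms
    (Fq : Type*) [Field Fq] [Fintype Fq] (hchar : ringChar Fq ≠ 2)
    (c d : Fq) (hc : c ≠ 0) (hd : d ≠ 0) (b : Fq) (hb : b ≠ 0) :
    (∃ s ∈ Tset Fq,
      s * (tMat Fq c d * nMat Fq b * uEl Fq) * s⁻¹ =
        tMat Fq c d * xEl Fq * uEl Fq) ∧
    (∃ s ∈ Tset Fq,
      s * (tMat Fq c (b ^ 2 * d) * nMat Fq b * wEl Fq * uEl Fq) * s⁻¹ =
        b • (tMat Fq c d * xEl Fq * wEl Fq * uEl Fq)) := by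
  constructor
  · refine ⟨tMat Fq 1 b, ⟨1, b, one_ne_zero, hb, rfl⟩, ?_⟩
    rw [tMat_inv Fq 1 b one_ne_zero hb]
    ext i j
    fin_cases i <;> fin_cases j <;>
      (simp [tMat, nMat, uEl, xEl, Matrix.mul_apply, Fin.sum_univ_four,
        Matrix.diagonal_apply, Matrix.vecHead, Matrix.vecTail, Function.comp];
       try field_simp; try ring)
  · refine ⟨tMat Fq 1 b⁻¹, ⟨1, b⁻¹, one_ne_zero, inv_ne_zero hb, rfl⟩, ?_⟩
    rw [tMat_inv Fq 1 b⁻¹ one_ne_zero (inv_ne_zero hb)]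
    ext i j
    fin_cases i <;> fin_cases j <;>
      (simp [tMat, nMat, uEl, xEl, wEl, Matrix.mul_apply, Fin.sum_univ_four,
        Matrix.diagonal_apply, Matrix.vecHead, Matrix.vecTail, Function.comp,
        Matrix.smul_apply];
       try field_simp; try ring)
    all_goals ring
end

section
/- Let F_q be a finite field of odd characteristic. For all c, d ∈ F_qˣ with d ≠ 1 and all b ∈ F_q, the element t_{c,d} n_b u is conjugate by an element of N to t_{c,d} u. -/
open Matrix

set_option maxHeartbeats 1000000 in
/-- For `c, d ∈ F_qˣ` with `d ≠ 1` and `b ∈ F_q` (`q` odd), the element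
`t_{c,d} n_b u` is `N`-conjugate to `t_{c,d} u`. -/
theorem N_conjugate_tnu_to_tu
    (Fq : Type*) [Field Fq] [Fintype Fq] (hchar : ringChar Fq ≠ 2)
    (c d : Fq) (hc : c ≠ 0) (hd : d ≠ 0) (hd1 : d ≠ 1) (b : Fq) :
    ∃ n ∈ Nset Fq,
      n * (tMat Fq c d * nMat Fq b * uEl Fq) * n⁻¹ = tMat Fq c d * uEl Fq := by
  set B : Fq := b / (1 - d) with hB
  refine ⟨nMat Fq B, ⟨B, rfl⟩, ?_⟩
  have hinv : (nMat Fq B)⁻¹ = nMat Fq (-B) := by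
    apply inv_eq_right_inv
    simp only [nMat]
    ext i j
    fin_cases i <;> fin_cases j <;>
      simp [Matrix.mul_apply, Fin.sum_univ_four, Matrix.one_apply,
        Matrix.vecHead, Matrix.vecTail, Function.comp]
  rw [hinv]
  have ht : tMat Fq c d = !![1,0,0,0; 0,d,0,0; 0,0,c,0; 0,0,0,c*d] := by
    ext i j
    fin_cases i <;> fin_cases j <;> simp [tMat, Matrix.diagonal, Matrix.vecHead, Matrix.vecTail]
  have hd1' : 1 - d ≠ 0 := sub_ne_zero.mpr (Ne.symm hd1)
  have hBd : B * (1 - d) = b := div_mul_cancel₀ b hd1'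
  rw [ht]
  simp only [nMat, uEl]
  ext i j
  fin_cases i <;> fin_cases j <;>
    simp [Matrix.mul_apply, Fin.sum_univ_four, Matrix.vecHead, Matrix.vecTail,
      Function.comp] <;>
    first | ring1 | linear_combination hBd | linear_combination (-c) * hBd | linear_combination c * hBd | linear_combination -hBd | (field_simp; ring1) | field_simp
end

section
/- Let F_q be a finite field of odd characteristic and c, d ∈ F_qˣ. Then (t_{c,d} w u)² = −cd·I₄. Moreover, if −cd = s² for some s ∈ F_qˣ, then t_{c,d} w u is conjugate in GSp(4,F_q) to the diagonal matrix diag(s, s, −s, −s). -/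
open Matrix

set_option maxHeartbeats 1600000 in
/-- For `c, d ∈ F_qˣ` (`q` odd): `(t_{c,d} w u)² = −cd • I₄`, and if
`−cd = s²` with `s ∈ F_qˣ` then `t_{c,d} w u` is conjugate in `GSp(4,F_q)` to
`diag(s, s, −s, −s)`. -/
theorem twu_squared_and_conjugate_to_diagonal
    (Fq : Type*) [Field Fq] [Fintype Fq] (hchar : ringChar Fq ≠ 2)
    (c d : Fq) (hc : c ≠ 0) (hd : d ≠ 0) :
    (tMat Fq c d * wEl Fq * uEl Fq) ^ 2 =
      (-(c * d)) • (1 : Matrix (Fin 4) (Fin 4) Fq) ∧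
    ∀ s : Fq, s ≠ 0 → -(c * d) = s ^ 2 →
      ∃ g ∈ GSp4 Fq,
        g * (tMat Fq c d * wEl Fq * uEl Fq) * g⁻¹ =
          Matrix.diagonal ![s, s, -s, -s] := by
  have h2 : (2 : Fq) ≠ 0 := by
    have := Ring.two_ne_zero (by simpa using hchar)
    simpa using this
  set A : Matrix (Fin 4) (Fin 4) Fq :=
    !![0, 0, 0, -1; 0, 0, d, 0; 0, -c, 0, 0; c * d, 0, 0, 0] with hA
  have hAeq : tMat Fq c d * wEl Fq * uEl Fq = A := by
    ext i j
    fin_cases i <;> fin_cases j <;>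
      simp [tMat, wEl, uEl, hA, Matrix.mul_apply, Fin.sum_univ_four, Matrix.vecHead, Matrix.vecTail, Matrix.diagonal] <;> ring
  rw [hAeq]
  constructor
  · ext i j
    fin_cases i <;> fin_cases j <;>
      simp [hA, pow_two, Matrix.mul_apply, Fin.sum_univ_four, Matrix.one_apply, Matrix.vecHead, Matrix.vecTail, Matrix.diagonal] <;>
      ring
  · intro s hs hcd
    have hcd' : c * d = -s ^ 2 := by linear_combination -hcd
    set g : Matrix (Fin 4) (Fin 4) Fq :=
      !![s, 0, 0, -1; 0, c, -s, 0; 0, c, s, 0; c * s, 0, 0, c] with hg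
    set h : Matrix (Fin 4) (Fin 4) Fq :=
      !![1/(2*s), 0, 0, 1/(2*c*s); 0, 1/(2*c), 1/(2*c), 0;
         0, -(1/(2*s)), 1/(2*s), 0; -(1/2), 0, 0, 1/(2*c)] with hh
    have hgh : g * h = 1 := by
      ext i j
      fin_cases i <;> fin_cases j <;>
        simp [hg, hh, Matrix.mul_apply, Fin.sum_univ_four, Matrix.one_apply] <;>
        field_simp <;> ring
    have hdetu : IsUnit g.det := Matrix.isUnit_det_of_right_inverse hgh
    have hunit : IsUnit g := by
      rw [Matrix.isUnit_iff_isUnit_det]; exact hdetu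
    have hgt : gᵀ = !![s, 0, 0, c * s; 0, c, c, 0; 0, -s, s, 0; -1, 0, 0, c] := by
      ext i j
      fin_cases i <;> fin_cases j <;> simp [hg]
    refine ⟨g, ⟨hunit, ?_⟩, ?_⟩
    · refine ⟨Units.mk0 (2 * c * s) (mul_ne_zero (mul_ne_zero h2 hc) hs), ?_⟩
      rw [hgt]
      ext i j
      fin_cases i <;> fin_cases j <;>
        simp [hg, Jmat, Matrix.mul_apply, Fin.sum_univ_four, Matrix.smul_apply,
          Matrix.vecHead, Matrix.vecTail, Units.val_mk0, smul_eq_mul] <;>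
        ring
    · have key : g * A = Matrix.diagonal ![s, s, -s, -s] * g := by
        ext i j
        fin_cases i <;> fin_cases j <;>
          simp [hg, hA, Matrix.mul_apply, Fin.sum_univ_four, Matrix.vecHead, Matrix.vecTail, Matrix.diagonal] <;>
          first
            | ring1
            | linear_combination hcd'
            | linear_combination -hcd'
            | linear_combination 2 * hcd'
            | linear_combination -2 * hcd'
            | linear_combination c * hcd'
            | linear_combination -c * hcd'
            | linear_combination (c - 1) * hcd'
            | linear_combination (1 - c) * hcd'
      calc g * A * g⁻¹ = Matrix.diagonal ![s, s, -s, -s] * g * g⁻¹ := by rw [key]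
        _ = Matrix.diagonal ![s, s, -s, -s] * (g * g⁻¹) := by rw [Matrix.mul_assoc]
        _ = Matrix.diagonal ![s, s, -s, -s] := by
            rw [Matrix.mul_nonsing_inv _ hdetu, Matrix.mul_one]
end

section
/- Let F_q be a finite field of odd characteristic, c, d ∈ F_qˣ, and let Ω be a field extension of F_q containing elements α and β with α² = −c and β² = 1 + 4d. Then the characteristic polynomial of the matrix t_{c,d}·x·w·u, viewed over Ω, factors as ∏_{ε ∈ {1,−1}} ∏_{δ ∈ {1,−1}} ( X − α(ε + δβ)/2 ). In particular, if d ≠ −1/4 and β ≠ 0, ±1 give distinct values, the matrix has four distinct eigenvalues in Ω. -/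
open Matrix

/-!
`t_{c,d} x w u` is block anti-diagonal with `2 × 2` blocks `P`, `Q`, so its characteristic
polynomial is `χ_{PQ}(X²) = X⁴ + c(1 + 2d) X² + c²d²`. Its roots are `±r, ±s` with
`r = α(1 + β)/2`, `s = α(1 − β)/2`, because `r² + s² = −c(1 + 2d)` and `rs = cd`. The four
values differ pairwise by `αβ`, `α` or `α(1 ± β)`, which vanish only if `c = 0`, `1 + 4d = 0`
or `d = 0`.
-/

open Polynomial

theorem tMat_mul_xEl_mul_wEl_mul_uEl (R : Type*) [CommRing R] (c d : R) :
    tMat R c d * xEl R * wEl R * uEl R =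
      !![0, 0, 1, -1; 0, 0, d, 0; -c, -c, 0, 0; c * d, 0, 0, 0] := by
  ext i j
  fin_cases i <;> fin_cases j <;>
    simp [tMat, xEl, nMat, wEl, uEl, Matrix.mul_apply, Fin.sum_univ_four]

theorem charpoly_txwu (R : Type*) [CommRing R] (c d : R) :
    (tMat R c d * xEl R * wEl R * uEl R).charpoly =
      X ^ 4 + C (c + 2 * c * d) * X ^ 2 + C (c ^ 2 * d ^ 2) := by
  rw [tMat_mul_xEl_mul_wEl_mul_uEl, Matrix.charpoly, Matrix.det_succ_row_zero]
  simp [Fin.sum_univ_succ, Matrix.det_fin_three, charmatrix_apply, Matrix.submatrix,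
    Fin.succAbove, map_ofNat]
  ring

theorem X_sub_C_mul_X_sub_C_mul_X_sub_C_neg_mul_X_sub_C_neg {R : Type*} [CommRing R] (r s : R) :
    (X - C r) * (X - C s) * (X - C (-s)) * (X - C (-r)) =
      X ^ 4 - C (r ^ 2 + s ^ 2) * X ^ 2 + C ((r * s) ^ 2) := by
  simp only [map_neg, map_add, map_pow, map_mul]
  ring

theorem biquadratic_eq_prod_X_sub_C {K : Type*} [Field K] (h2 : (2 : K) ≠ 0) {α β c d : K}
    (hα : α ^ 2 = -c) (hβ : β ^ 2 = 1 + 4 * d) :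
    X ^ 4 + C (c + 2 * c * d) * X ^ 2 + C (c ^ 2 * d ^ 2) =
      (X - C (α * (1 + β) / 2)) * (X - C (α * (1 - β) / 2)) *
        (X - C (α * (-1 + β) / 2)) * (X - C (α * (-1 - β) / 2)) := by
  have hsum : (α * (1 + β) / 2) ^ 2 + (α * (1 - β) / 2) ^ 2 = -(c + 2 * c * d) := by
    field_simp
    linear_combination (2 + 2 * β ^ 2) * hα - 2 * c * hβ
  have hprod : α * (1 + β) / 2 * (α * (1 - β) / 2) = c * d := by
    field_simp
    linear_combination (1 - β ^ 2) * hα + c * hβ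
  rw [show α * (-1 + β) / 2 = -(α * (1 - β) / 2) by ring,
    show α * (-1 - β) / 2 = -(α * (1 + β) / 2) by ring,
    X_sub_C_mul_X_sub_C_mul_X_sub_C_neg_mul_X_sub_C_neg, hsum, hprod, map_neg, mul_pow]
  ring

theorem pairwise_ne_biquadratic_roots {K : Type*} [Field K] (h2 : (2 : K) ≠ 0) {α β c d : K}
    (hc : c ≠ 0) (hd : d ≠ 0) (hd4 : 1 + 4 * d ≠ 0)
    (hα : α ^ 2 = -c) (hβ : β ^ 2 = 1 + 4 * d) :
    List.Pairwise (· ≠ ·)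
      [α * (1 + β) / 2, α * (1 - β) / 2, α * (-1 + β) / 2, α * (-1 - β) / 2] := by
  have hα0 : α ≠ 0 := by rintro rfl; exact hc (by linear_combination hα)
  have hβ0 : β ≠ 0 := by rintro rfl; exact hd4 (by linear_combination -hβ)
  have hβ1 : (β - 1) * (β + 1) ≠ 0 := by
    rw [show (β - 1) * (β + 1) = 2 * 2 * d by linear_combination hβ]
    exact mul_ne_zero (mul_ne_zero h2 h2) hd
  grind

theorem charpoly_txwu_factors_general
    (Fq : Type*) [Field Fq] (hchar : ringChar Fq ≠ 2)
    (c d : Fq) (hc : c ≠ 0) (hd : d ≠ 0)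
    (Ω : Type*) [Field Ω] [Algebra Fq Ω] (α β : Ω)
    (hα : α ^ 2 = -(algebraMap Fq Ω c)) (hβ : β ^ 2 = 1 + 4 * algebraMap Fq Ω d) :
    ((tMat Fq c d * xEl Fq * wEl Fq * uEl Fq).map (algebraMap Fq Ω)).charpoly =
      (X - C (α * (1 + β) / 2)) * (X - C (α * (1 - β) / 2)) *
        (X - C (α * (-1 + β) / 2)) * (X - C (α * (-1 - β) / 2)) ∧
    (d ≠ -(4⁻¹ : Fq) →
      List.Pairwise (· ≠ ·)
        [α * (1 + β) / 2, α * (1 - β) / 2, α * (-1 + β) / 2, α * (-1 - β) / 2]) := by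
  have h2 : (2 : Fq) ≠ 0 := Ring.two_ne_zero hchar
  have hΩ2 : (2 : Ω) ≠ 0 := by
    rw [← map_ofNat (algebraMap Fq Ω) 2]
    exact (_root_.map_ne_zero _).mpr h2
  refine ⟨?_, fun hd4 => ?_⟩
  · rw [charpoly_map, charpoly_txwu, ← biquadratic_eq_prod_X_sub_C hΩ2 hα hβ]
    simp [map_ofNat]
  · have h4d : 1 + 4 * d ≠ 0 := by
      contrapose! hd4
      have h4 : (4 : Fq) ≠ 0 := by
        rw [show (4 : Fq) = 2 ^ 2 by norm_num]
        exact pow_ne_zero 2 h2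
      field_simp
      linear_combination hd4
    refine pairwise_ne_biquadratic_roots hΩ2 ((_root_.map_ne_zero _).mpr hc)
      ((_root_.map_ne_zero _).mpr hd) ?_ hα hβ
    simpa [map_ofNat] using (_root_.map_ne_zero (algebraMap Fq Ω)).mpr h4d

open Polynomial in
/-- For `c, d ∈ F_qˣ` (`q` odd) and a field extension `Ω/F_q` containing
`α, β` with `α² = −c` and `β² = 1 + 4d`, the characteristic polynomial of `t_{c,d} x w u`
over `Ω` factors as `∏_{ε,δ ∈ {±1}} (X − α(ε + δβ)/2)`; if moreover `d ≠ −1/4` the four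
eigenvalues are pairwise distinct. -/
theorem charpoly_txwu_factors
    (Fq : Type*) [Field Fq] [Fintype Fq] (hchar : ringChar Fq ≠ 2)
    (c d : Fq) (hc : c ≠ 0) (hd : d ≠ 0)
    (Ω : Type*) [Field Ω] [Algebra Fq Ω] (α β : Ω)
    (hα : α ^ 2 = -(algebraMap Fq Ω c)) (hβ : β ^ 2 = 1 + 4 * algebraMap Fq Ω d) :
    ((tMat Fq c d * xEl Fq * wEl Fq * uEl Fq).map (algebraMap Fq Ω)).charpoly =
      (X - C (α * (1 + β) / 2)) * (X - C (α * (1 - β) / 2)) *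
        (X - C (α * (-1 + β) / 2)) * (X - C (α * (-1 - β) / 2)) ∧
    (d ≠ -(4⁻¹ : Fq) →
      List.Pairwise (· ≠ ·)
        [α * (1 + β) / 2, α * (1 - β) / 2, α * (-1 + β) / 2, α * (-1 - β) / 2]) :=
  charpoly_txwu_factors_general Fq hchar c d hc hd Ω α β hα hβ
end

section
/- Let F_q be a finite field of odd characteristic and d ∈ F_qˣ. Then the matrix t_{1,d}·u is conjugate in GSp(4,F_q) to the diagonal matrix diag(1, −1, −d, d). -/
open Matrix

/- The rows are left eigenvectors of `t_{1,d} u` for the eigenvalues `1, -1, -d, d`; since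
`t_{1,d} u` only swaps coordinates `1 ↔ 3` and `2 ↔ 4` (the latter with the factor `-d`),
they do not depend on `d`. -/
def diagonalizer (R : Type*) [CommRing R] : Matrix (Fin 4) (Fin 4) R :=
  !![1, 0, 1, 0; -1, 0, 1, 0; 0, 1, 0, 1; 0, 1, 0, -1]

section

variable {R : Type*} [CommRing R]

theorem tMat_one_mul_uEl (d : R) :
    tMat R 1 d * uEl R = !![0, 0, 1, 0; 0, 0, 0, -d; 1, 0, 0, 0; 0, -d, 0, 0] := by
  ext i j
  fin_cases i <;> fin_cases j <;> simp [tMat, uEl, Matrix.mul_apply, Fin.sum_univ_four]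

theorem diagonalizer_mul_transpose : diagonalizer R * (diagonalizer R)ᵀ = (2 : R) • 1 := by
  ext i j
  fin_cases i <;> fin_cases j <;> simp [diagonalizer, Matrix.mul_apply, Fin.sum_univ_four] <;> ring

theorem diagonalizer_transpose_mul_Jmat_mul :
    (diagonalizer R)ᵀ * Jmat R * diagonalizer R = (-2 : R) • Jmat R := by
  ext i j
  fin_cases i <;> fin_cases j <;>
    simp [diagonalizer, Jmat, Matrix.mul_apply, Fin.sum_univ_four] <;> ring

theorem isUnit_det_diagonalizer (h2 : IsUnit (2 : R)) : IsUnit (diagonalizer R).det := by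
  refine Matrix.isUnit_det_of_right_inverse
    (B := ((h2.unit⁻¹ : Rˣ) : R) • (diagonalizer R)ᵀ) ?_
  rw [Matrix.mul_smul, diagonalizer_mul_transpose, smul_smul, h2.val_inv_mul, one_smul]

theorem diagonalizer_mem_GSp4 (h2 : IsUnit (2 : R)) : diagonalizer R ∈ GSp4 R :=
  ⟨(Matrix.isUnit_iff_isUnit_det _).2 (isUnit_det_diagonalizer h2),
    -h2.unit, diagonalizer_transpose_mul_Jmat_mul⟩

theorem diagonalizer_mul_tMat_one_mul_uEl (d : R) :
    diagonalizer R * (tMat R 1 d * uEl R) = Matrix.diagonal ![1, -1, -d, d] * diagonalizer R := by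
  rw [tMat_one_mul_uEl]
  ext i j
  fin_cases i <;> fin_cases j <;> simp [diagonalizer, Matrix.mul_apply, Fin.sum_univ_four]

end

theorem t1du_conjugate_to_diagonal_general
    (Fq : Type*) [Field Fq] (hchar : ringChar Fq ≠ 2)
    (d : Fq) :
    ∃ g ∈ GSp4 Fq,
      g * (tMat Fq 1 d * uEl Fq) * g⁻¹ = Matrix.diagonal ![1, -1, -d, d] := by
  have h2 : IsUnit (2 : Fq) := (Ring.two_ne_zero hchar).isUnit
  refine ⟨diagonalizer Fq, diagonalizer_mem_GSp4 h2, ?_⟩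
  rw [diagonalizer_mul_tMat_one_mul_uEl, Matrix.mul_assoc,
    Matrix.mul_nonsing_inv _ (isUnit_det_diagonalizer h2), Matrix.mul_one]

/-- For `d ∈ F_qˣ` (`q` odd), the matrix `t_{1,d} u` is conjugate in
`GSp(4,F_q)` to `diag(1, −1, −d, d)`. -/
theorem t1du_conjugate_to_diagonal
    (Fq : Type*) [Field Fq] [Fintype Fq] (hchar : ringChar Fq ≠ 2)
    (d : Fq) (hd : d ≠ 0) :
    ∃ g ∈ GSp4 Fq,
      g * (tMat Fq 1 d * uEl Fq) * g⁻¹ = Matrix.diagonal ![1, -1, -d, d] :=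
  t1du_conjugate_to_diagonal_general Fq hchar d
end
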